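/- Let A be a symmetric positive definite real matrix indexed by a finite type such that every entry of A^{-1} is strictly positive. Let h be an index with standard basis vector e_h and let c > 0 be a real number. Then A^{-1} - (A + c·e_h e_hᵀ)^{-1} = c·(A^{-1} e_h)(A^{-1} e_h)ᵀ / (1 + c·(A^{-1})_{h h}), and every entry of this matrix is strictly positive; in particular every entry of (A + c·e_h e_hᵀ)^{-1} is strictly smaller than the corresponding entry of A^{-1}. -/

import Mathlib

/-!
Sherman–Morrison: `(A + u vᵀ)⁻¹ = A⁻¹ - (A⁻¹u)(vᵀA⁻¹) / (1 + vᵀA⁻¹u)`. For the update `c·e_h e_hᵀ`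
of a symmetric `A` both outer factors are the column `A⁻¹e_h`, so the decrease of `A⁻¹` is
`c/(1 + c(A⁻¹)_{hh})` times the entrywise products `(A⁻¹)_{ih}(A⁻¹)_{jh}`, all positive when
the entries of `A⁻¹` are.
-/

open Matrix

namespace Matrix

theorem single_eq_vecMulVec_single {m n α : Type*} [DecidableEq m] [DecidableEq n]
    [MulZeroOneClass α] (i : m) (j : n) (c : α) :
    single i j c = vecMulVec (Pi.single i c) (Pi.single j 1) := by
  ext a b
  simp [single_apply, vecMulVec_apply, Pi.single_apply, ← ite_and, and_comm, eq_comm]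

variable {n K : Type*} [Fintype n] [DecidableEq n] [Field K]

theorem inv_add_vecMulVec {A : Matrix n n K} (hA : IsUnit A.det) (u v : n → K)
    (hd : 1 + v ⬝ᵥ (A⁻¹ *ᵥ u) ≠ 0) :
    (A + vecMulVec u v)⁻¹ =
      A⁻¹ - (1 + v ⬝ᵥ (A⁻¹ *ᵥ u))⁻¹ • vecMulVec (A⁻¹ *ᵥ u) (v ᵥ* A⁻¹) := by
  refine inv_eq_right_inv ?_
  set d := v ⬝ᵥ (A⁻¹ *ᵥ u)
  have hs : (1 + d)⁻¹ + (1 + d)⁻¹ * d = 1 := by field_simp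
  rw [add_mul, mul_sub, mul_sub, mul_nonsing_inv A hA, Matrix.mul_smul, Matrix.mul_smul,
    mul_vecMulVec, mulVec_mulVec, mul_nonsing_inv A hA, one_mulVec, vecMulVec_mul_vecMulVec,
    vecMulVec_mul, vecMulVec_smul]
  -- the product is `1 + (1 - (1 + d)⁻¹ (1 + d)) • u (vᵀA⁻¹)`
  linear_combination (norm := module) -hs • vecMulVec u (v ᵥ* A⁻¹)

theorem inv_sub_inv_add_single_of_isSymm {A : Matrix n n K} (hsym : A.IsSymm)
    (hA : IsUnit A.det) (h : n) (c : K) (hd : 1 + c * A⁻¹ h h ≠ 0) :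
    A⁻¹ - (A + single h h c)⁻¹ =
      (c / (1 + c * A⁻¹ h h)) • vecMulVec (A⁻¹ *ᵥ Pi.single h 1) (A⁻¹ *ᵥ Pi.single h 1) := by
  have hcol : Pi.single h 1 ᵥ* A⁻¹ = A⁻¹ *ᵥ Pi.single h 1 := by
    rw [← vecMul_transpose, hsym.inv.eq]
  have hu : A⁻¹ *ᵥ Pi.single h c = c • A⁻¹ *ᵥ Pi.single h 1 := by
    rw [← mulVec_smul, ← Pi.single_smul', smul_eq_mul, mul_one]
  have hdot : Pi.single h 1 ⬝ᵥ (A⁻¹ *ᵥ Pi.single h c) = c * A⁻¹ h h := by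
    simp [hu]
  rw [single_eq_vecMulVec_single, inv_add_vecMulVec hA _ _ (hdot ▸ hd), hdot, hu, hcol,
    smul_vecMulVec, smul_smul, div_eq_inv_mul, sub_sub_cancel]

end Matrix

/-- Sherman–Morrison for a diagonal rank-one update: if `A` is symmetric positive definite
with all entries of `A⁻¹` strictly positive, `h` is an index and `c > 0`, then
`A⁻¹ - (A + c·e_h e_hᵀ)⁻¹ = c·(A⁻¹e_h)(A⁻¹e_h)ᵀ / (1 + c·(A⁻¹)_{hh})`, every entry of
this difference is strictly positive, and every entry of `(A + c·e_h e_hᵀ)⁻¹` is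
strictly smaller than the corresponding entry of `A⁻¹`. -/
theorem inv_rank_one_update_entrywise {n : Type*} [Fintype n] [DecidableEq n]
    (A : Matrix n n ℝ) (hA : A.PosDef) (hpos : ∀ i j, 0 < A⁻¹ i j)
    (h : n) (c : ℝ) (hc : 0 < c) :
    A⁻¹ - (A + Matrix.single h h c)⁻¹ =
        (c / (1 + c * A⁻¹ h h)) •
          Matrix.vecMulVec (A⁻¹ *ᵥ Pi.single h 1) (A⁻¹ *ᵥ Pi.single h 1) ∧
      (∀ i j, 0 < (A⁻¹ - (A + Matrix.single h h c)⁻¹) i j) ∧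
      ∀ i j, (A + Matrix.single h h c)⁻¹ i j < A⁻¹ i j := by
  have hden : 0 < 1 + c * A⁻¹ h h := by have := hpos h h; positivity
  have hdiff := inv_sub_inv_add_single_of_isSymm (isHermitian_iff_isSymm.mp hA.isHermitian)
    hA.det_pos.ne'.isUnit h c hden.ne'
  have hdiff_pos : ∀ i j, 0 < (A⁻¹ - (A + single h h c)⁻¹) i j := by
    intro i j
    rw [hdiff, Matrix.smul_apply, vecMulVec_apply, mulVec_single_one]
    have := hpos i h
    have := hpos j h
    simp only [col_apply, smul_eq_mul]
    positivity
  exact ⟨hdiff, hdiff_pos, fun i j => sub_pos.mp (hdiff_pos i j)⟩
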